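/- Preservation under n-layered simulation: Let M and M' be n-layered models over Δⁿ and S an n-layered simulation from M to M'. Then for every k ∈ {0,…,n}, every pair of tuples with (w_0,…,w_k) S_k (w'_0,…,w'_k), and every positive strict k-layered formula φ_k ∈ SFm⁺(k,Δⁿ), if M_k, w_0,…,w_k ⊨_k φ_k then M'_k, w'_0,…,w'_k ⊨_k φ_k. -/

import Mathlib

/-! Layered hybrid logic (R. Neves et al., "A hybrid modal logic for k-layered
transition systems"): signatures, formulas, models, satisfaction. -/

/-- An `n`-layered signature: a family of (disjoint) sets of propositional
symbols and nominals for each level. -/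
structure LSig : Type 1 where
  P : ℕ → Type
  N : ℕ → Type

/-- Agreement of two dependent tuples on components `0,…,k`. -/
def agreeUpTo {W : ℕ → Type} (k : ℕ) (w v : ∀ r, W r) : Prop :=
  ∀ r, r ≤ k → w r = v r

theorem agreeUpTo_refl {W : ℕ → Type} (k : ℕ) (w : ∀ r, W r) : agreeUpTo k w w :=
  fun _ _ => rfl

theorem agreeUpTo_symm {W : ℕ → Type} {k : ℕ} {w v : ∀ r, W r}
    (h : agreeUpTo k w v) : agreeUpTo k v w := fun r hr => (h r hr).symm

theorem agreeUpTo_trans {W : ℕ → Type} {k : ℕ} {w v u : ∀ r, W r}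
    (h₁ : agreeUpTo k w v) (h₂ : agreeUpTo k v u) : agreeUpTo k w u :=
  fun r hr => (h₁ r hr).trans (h₂ r hr)

theorem agreeUpTo_mono {W : ℕ → Type} {j k : ℕ} (hjk : j ≤ k) {w v : ∀ r, W r}
    (h : agreeUpTo k w v) : agreeUpTo j w v := fun r hr => h r (hr.trans hjk)

mutual
  /-- The formulas `Fm_k(Δⁿ)` of level `k`. -/
  inductive LForm (S : LSig) : ℕ → Type
    | base {k : ℕ} : LBasic S k → LForm S (k + 1)
    | nom {k : ℕ} : S.N k → LForm S k
    | prp {k : ℕ} : S.P k → LForm S k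
    | neg {k : ℕ} : LForm S k → LForm S k
    | and {k : ℕ} : LForm S k → LForm S k → LForm S k
    | at_ {k : ℕ} : S.N k → LForm S k → LForm S k
    | dia {k : ℕ} : LForm S k → LForm S k
  /-- The basic formulas `φ^b_k` of level `k`. -/
  inductive LBasic (S : LSig) : ℕ → Type
    | nom {k : ℕ} : S.N k → LBasic S k
    | prp {k : ℕ} : S.P k → LBasic S k
    | lift {k : ℕ} : LBasic S k → LBasic S (k + 1)
    | at_ {k : ℕ} : S.N k → LForm S k → LBasic S k
    | dia {k : ℕ} : LForm S k → LBasic S k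
end

/-- An `n`-layered model.  Tuples `(w_0,…,w_k)` are represented as dependent
functions `w : ∀ r, W r` of which only the components `0,…,k` are relevant;
all predicates of the model are required to depend only on the relevant
components (the `_ext` fields).  `Dtop` is the top-level domain predicate
`Dⁿ ⊆ W_0 × ⋯ × W_n`; the lower-level predicates `D_k` are its restrictions
(see `LModel.D`).  `R k` is `R_k ⊆ D_k × D_k`, `VP k p` encodes
`w_k ∈ V_k^Prop(p, w_0,…,w_{k-1})` and `VN k i` is `V_k^Nom(i)`.
`cover` states `W_k = {v | D_k(w_0,…,w_{k-1},v) for some w's}`. -/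
structure LModel (n : ℕ) (S : LSig) where
  W : ℕ → Type
  Dtop : (∀ r, W r) → Prop
  R : ℕ → (∀ r, W r) → (∀ r, W r) → Prop
  VP : ∀ k, S.P k → (∀ r, W r) → Prop
  VN : ∀ k, S.N k → W k
  Dtop_ext : ∀ w w', agreeUpTo n w w' → Dtop w → Dtop w'
  R_sub : ∀ k, k ≤ n → ∀ w v, R k w v →
    (∃ u, agreeUpTo k u w ∧ Dtop u) ∧ (∃ u, agreeUpTo k u v ∧ Dtop u)
  R_ext : ∀ k, k ≤ n → ∀ w w' v v',
    agreeUpTo k w w' → agreeUpTo k v v' → R k w v → R k w' v'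
  VP_ext : ∀ k, k ≤ n → ∀ (p : S.P k) w w', agreeUpTo k w w' → VP k p w → VP k p w'
  cover : ∀ k, k ≤ n → ∀ x : W k, ∃ w, (∃ u, agreeUpTo k u w ∧ Dtop u) ∧ w k = x

/-- `D_k`, the restriction of the domain predicate to the components `0,…,k`. -/
def LModel.D {n : ℕ} {S : LSig} (M : LModel n S) (k : ℕ) (w : ∀ r, M.W r) : Prop :=
  ∃ u, agreeUpTo k u w ∧ M.Dtop u

theorem LModel.D_restrict {n : ℕ} {S : LSig} (M : LModel n S) {j k : ℕ}
    (hjk : j ≤ k) (w : ∀ r, M.W r) :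
    (∃ u, agreeUpTo j u w ∧ M.D k u) ↔ M.D j w := by
  constructor
  · rintro ⟨u, hu, t, ht, htop⟩
    exact ⟨t, agreeUpTo_trans (agreeUpTo_mono hjk ht) hu, htop⟩
  · rintro ⟨t, ht, htop⟩
    exact ⟨t, ht, t, agreeUpTo_refl _ _, htop⟩

/-- The `k`-restriction `M_k` of an `n`-layered model (`k ≤ n`). -/
def LModel.restrict {n : ℕ} {S : LSig} (M : LModel n S) (k : ℕ) (hk : k ≤ n) :
    LModel k S where
  W := M.W
  Dtop := M.D k
  R := M.R
  VP := M.VP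
  VN := M.VN
  Dtop_ext := fun w w' h hD => by
    obtain ⟨u, hu, htop⟩ := hD
    exact ⟨u, agreeUpTo_trans hu h, htop⟩
  R_sub := fun j hj w v hR =>
    ⟨(M.D_restrict hj w).mpr (M.R_sub j (hj.trans hk) w v hR).1,
     (M.D_restrict hj v).mpr (M.R_sub j (hj.trans hk) w v hR).2⟩
  R_ext := fun j hj => M.R_ext j (hj.trans hk)
  VP_ext := fun j hj => M.VP_ext j (hj.trans hk)
  cover := fun j hj x => by
    obtain ⟨w, hD, hx⟩ := M.cover j (hj.trans hk) x
    exact ⟨w, (M.D_restrict hj w).mpr hD, hx⟩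

mutual
  /-- Satisfaction `M_k, w_0,…,w_k ⊨_k φ` (only the components `0,…,k` of `w`
  are relevant). -/
  def LSat {n : ℕ} {S : LSig} (M : LModel n S) :
      ∀ (k : ℕ), LForm S k → (∀ r, M.W r) → Prop
    | _, .base b, w => LBSat M _ b w
    | k, .nom i, w => w k = M.VN k i ∧ M.D k (Function.update w k (M.VN k i))
    | k, .prp p, w => M.VP k p w
    | k, .neg φ, w => ¬ LSat M k φ w
    | k, .and φ ψ, w => LSat M k φ w ∧ LSat M k ψ w
    | k, .at_ i φ, w => M.D k (Function.update w k (M.VN k i)) ∧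
        LSat M k φ (Function.update w k (M.VN k i))
    | k, .dia φ, w => ∃ v, M.R k w v ∧ LSat M k φ v
  /-- Satisfaction of basic formulas. -/
  def LBSat {n : ℕ} {S : LSig} (M : LModel n S) :
      ∀ (k : ℕ), LBasic S k → (∀ r, M.W r) → Prop
    | k, .nom i, w => w k = M.VN k i ∧ M.D k (Function.update w k (M.VN k i))
    | k, .prp p, w => M.VP k p w
    | _, .lift b, w => LBSat M _ b w
    | k, .at_ i φ, w => M.D k (Function.update w k (M.VN k i)) ∧
        LSat M k φ (Function.update w k (M.VN k i))
    | k, .dia φ, w => ∃ v, M.R k w v ∧ LSat M k φ v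
end
/-- Strict `k`-layered formulas `SFm(k,Δⁿ)`: built only from level-`k`
atoms, `¬`, `∧`, `@` and `◇_k` (no embedded lower-level basic formulas). -/
def LForm.Strict {S : LSig} : ∀ {k : ℕ}, LForm S k → Prop
  | _, .base _ => False
  | _, .nom _ => True
  | _, .prp _ => True
  | _, .neg φ => φ.Strict
  | _, .and φ ψ => φ.Strict ∧ ψ.Strict
  | _, .at_ _ φ => φ.Strict
  | _, .dia φ => φ.Strict

mutual
  /-- Positive formulas: no negation. -/
  def LForm.Positive {S : LSig} : ∀ {k : ℕ}, LForm S k → Prop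
    | _, .base b => LBasic.Positive b
    | _, .nom _ => True
    | _, .prp _ => True
    | _, .neg _ => False
    | _, .and φ ψ => φ.Positive ∧ ψ.Positive
    | _, .at_ _ φ => φ.Positive
    | _, .dia φ => φ.Positive
  /-- Positive basic formulas: no negation. -/
  def LBasic.Positive {S : LSig} : ∀ {k : ℕ}, LBasic S k → Prop
    | _, .nom _ => True
    | _, .prp _ => True
    | _, .lift b => b.Positive
    | _, .at_ _ φ => LForm.Positive φ
    | _, .dia φ => LForm.Positive φ
end

/-- An `n`-layered bisimulation `B = (B_k ⊆ D_k × D'_k)_{k ≤ n}` between two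
`n`-layered models. -/
structure IsLayeredBisim {n : ℕ} {S : LSig} (M M' : LModel n S)
    (B : ∀ k, (∀ r, M.W r) → (∀ r, M'.W r) → Prop) : Prop where
  dom : ∀ k, k ≤ n → ∀ w w', B k w w' → M.D k w ∧ M'.D k w'
  ext : ∀ k, k ≤ n → ∀ w v w' v', agreeUpTo k w v → agreeUpTo k w' v' →
    B k w w' → B k v v'
  atom_prop : ∀ k, k ≤ n → ∀ w w', B k w w' → ∀ p : S.P k,
    (M.VP k p w ↔ M'.VP k p w')
  atom_nom_rel : ∀ k, k ≤ n → ∀ w w', B k w w' → ∀ i : S.N k,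
    B k (Function.update w k (M.VN k i)) (Function.update w' k (M'.VN k i))
  atom_nom_name : ∀ k, k ≤ n → ∀ w w', B k w w' → ∀ i : S.N k,
    ((w k = M.VN k i ∧ M.D k (Function.update w k (M.VN k i))) ↔
     (w' k = M'.VN k i ∧ M'.D k (Function.update w' k (M'.VN k i))))
  zig : ∀ k, k ≤ n → ∀ w w', B k w w' → ∀ v, M.R k w v →
    ∃ v', M'.R k w' v' ∧ B k v v'
  zag : ∀ k, k ≤ n → ∀ w w', B k w w' → ∀ v', M'.R k w' v' →
    ∃ v, M.R k w v ∧ B k v v'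

/-- An `n`-layered simulation `S = (S_k ⊆ D_k × D'_k)_{k ≤ n}` from `M` to `M'`. -/
structure IsLayeredSim {n : ℕ} {S : LSig} (M M' : LModel n S)
    (Srel : ∀ k, (∀ r, M.W r) → (∀ r, M'.W r) → Prop) : Prop where
  dom : ∀ k, k ≤ n → ∀ w w', Srel k w w' → M.D k w ∧ M'.D k w'
  ext : ∀ k, k ≤ n → ∀ w v w' v', agreeUpTo k w v → agreeUpTo k w' v' →
    Srel k w w' → Srel k v v'
  atom_prop : ∀ k, k ≤ n → ∀ w w', Srel k w w' → ∀ p : S.P k,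
    M.VP k p w → M'.VP k p w'
  atom_nom_rel : ∀ k, k ≤ n → ∀ w w', Srel k w w' → ∀ i : S.N k,
    Srel k (Function.update w k (M.VN k i)) (Function.update w' k (M'.VN k i))
  atom_nom_name : ∀ k, k ≤ n → ∀ w w', Srel k w w' → ∀ i : S.N k,
    (w k = M.VN k i ∧ M.D k (Function.update w k (M.VN k i))) →
    (w' k = M'.VN k i ∧ M'.D k (Function.update w' k (M'.VN k i)))
  zig : ∀ k, k ≤ n → ∀ w w', Srel k w w' → ∀ v, M.R k w v →
    ∃ v', M'.R k w' v' ∧ Srel k v v'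

/-- A model is `n`-hierarchical when each `R_{k+1}` restricted to the first
`k+1` components on each side coincides with `R_k`. -/
def IsHierarchical {n : ℕ} {S : LSig} (M : LModel n S) : Prop :=
  ∀ k, k + 1 ≤ n → ∀ w v,
    ((∃ w₁ v₁, agreeUpTo k w w₁ ∧ agreeUpTo k v v₁ ∧ M.R (k + 1) w₁ v₁) ↔
      M.R k w v)

/-- Restriction `B|_k` of a relation on top-level tuples to the first `k+1`
components on each side. -/
def relRestrict {W W' : ℕ → Type} (B : (∀ r, W r) → (∀ r, W' r) → Prop)
    (k : ℕ) : (∀ r, W r) → (∀ r, W' r) → Prop :=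
  fun w w' => ∃ v v', agreeUpTo k v w ∧ agreeUpTo k v' w' ∧ B v v'

/-- An `n`-hierarchical bisimulation `B ⊆ D_n × D'_n` between two
`n`-hierarchical models. -/
structure IsHierBisim {n : ℕ} {S : LSig} (M M' : LModel n S)
    (B : (∀ r, M.W r) → (∀ r, M'.W r) → Prop) : Prop where
  dom : ∀ w w', B w w' → M.D n w ∧ M'.D n w'
  ext : ∀ w v w' v', agreeUpTo n w v → agreeUpTo n w' v' → B w w' → B v v'
  atom_prop : ∀ w w', B w w' → ∀ k, k ≤ n → ∀ p : S.P k,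
    (M.VP k p w ↔ M'.VP k p w')
  atom_nom_rel : ∀ w w', B w w' → ∀ k, k ≤ n → ∀ i : S.N k,
    relRestrict B k (Function.update w k (M.VN k i))
      (Function.update w' k (M'.VN k i))
  atom_nom_name : ∀ w w', B w w' → ∀ k, k ≤ n → ∀ i : S.N k,
    ((w k = M.VN k i ∧ M.D k (Function.update w k (M.VN k i))) ↔
     (w' k = M'.VN k i ∧ M'.D k (Function.update w' k (M'.VN k i))))
  zig : ∀ w w', B w w' → ∀ v, M.R n w v → ∃ v', M'.R n w' v' ∧ B v v'
  zag : ∀ w w', B w w' → ∀ v', M'.R n w' v' → ∃ v, M.R n w v ∧ B v v'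

/-- An `n`-hierarchical simulation `S ⊆ D_n × D'_n` from `M` to `M'`. -/
structure IsHierSim {n : ℕ} {S : LSig} (M M' : LModel n S)
    (Srel : (∀ r, M.W r) → (∀ r, M'.W r) → Prop) : Prop where
  dom : ∀ w w', Srel w w' → M.D n w ∧ M'.D n w'
  ext : ∀ w v w' v', agreeUpTo n w v → agreeUpTo n w' v' → Srel w w' → Srel v v'
  atom_prop : ∀ w w', Srel w w' → ∀ k, k ≤ n → ∀ p : S.P k,
    M.VP k p w → M'.VP k p w'
  atom_nom_rel : ∀ w w', Srel w w' → ∀ k, k ≤ n → ∀ i : S.N k,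
    relRestrict Srel k (Function.update w k (M.VN k i))
      (Function.update w' k (M'.VN k i))
  atom_nom_name : ∀ w w', Srel w w' → ∀ k, k ≤ n → ∀ i : S.N k,
    (w k = M.VN k i ∧ M.D k (Function.update w k (M.VN k i))) →
    (w' k = M'.VN k i ∧ M'.D k (Function.update w' k (M'.VN k i)))
  zig : ∀ w w', Srel w w' → ∀ v, M.R n w v → ∃ v', M'.R n w' v' ∧ Srel v v'

/-- Iterated inclusion of basic formulas into higher levels. -/
def LBasic.liftN {S : LSig} {k : ℕ} (b : LBasic S k) : ∀ j : ℕ, LBasic S (k + j)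
  | 0 => b
  | j + 1 => (b.liftN j).lift

/-- Inclusion of basic formulas of level `k` into basic formulas of level
`m ≥ k`. -/
def LBasic.liftTo {S : LSig} {k m : ℕ} (h : k ≤ m) (b : LBasic S k) :
    LBasic S m :=
  (Nat.add_sub_cancel' h) ▸ b.liftN (m - k)

/-- A basic formula of level `k` is in particular a formula of level `k`. -/
def LBasic.toForm {S : LSig} : ∀ {k : ℕ}, LBasic S k → LForm S k
  | _, .nom i => .nom i
  | _, .prp p => .prp p
  | _, .lift b => .base b
  | _, .at_ i φ => .at_ i φ
  | _, .dia φ => .dia φ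

theorem IsLayeredSim.restrict {n : ℕ} {S : LSig} {M M' : LModel n S}
    {Srel : ℕ → (∀ r, M.W r) → (∀ r, M'.W r) → Prop} (hS : IsLayeredSim M M' Srel)
    (k : ℕ) (hk : k ≤ n) : IsLayeredSim (M.restrict k hk) (M'.restrict k hk) Srel where
  dom j hj w w' h :=
    ⟨(M.D_restrict hj w).mpr (hS.dom j (hj.trans hk) w w' h).1,
      (M'.D_restrict hj w').mpr (hS.dom j (hj.trans hk) w w' h).2⟩
  ext j hj := hS.ext j (hj.trans hk)
  atom_prop j hj := hS.atom_prop j (hj.trans hk)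
  atom_nom_rel j hj := hS.atom_nom_rel j (hj.trans hk)
  atom_nom_name j hj w w' h i hw :=
    have hw' := hS.atom_nom_name j (hj.trans hk) w w' h i
      ⟨hw.1, (M.D_restrict hj _).mp hw.2⟩
    ⟨hw'.1, (M'.D_restrict hj _).mpr hw'.2⟩
  zig j hj := hS.zig j (hj.trans hk)

theorem IsLayeredSim.lsat_of_lsat {n : ℕ} {S : LSig} {M M' : LModel n S}
    {Srel : ℕ → (∀ r, M.W r) → (∀ r, M'.W r) → Prop} (hS : IsLayeredSim M M' Srel) :
    ∀ {k : ℕ}, k ≤ n → ∀ φ : LForm S k, φ.Strict → φ.Positive →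
    ∀ {w : ∀ r, M.W r} {w' : ∀ r, M'.W r}, Srel k w w' → LSat M k φ w → LSat M' k φ w'
  | _, _, .base _, hstrict, _ => hstrict.elim
  | _, _, .neg _, _, hpos => hpos.elim
  | k, hk, .nom i, _, _ => fun hww' h => hS.atom_nom_name k hk _ _ hww' i h
  | k, hk, .prp p, _, _ => fun hww' h => hS.atom_prop k hk _ _ hww' p h
  | _, hk, .and φ ψ, hstrict, hpos => fun hww' h =>
    ⟨hS.lsat_of_lsat hk φ hstrict.1 hpos.1 hww' h.1,
      hS.lsat_of_lsat hk ψ hstrict.2 hpos.2 hww' h.2⟩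
  | k, hk, .at_ i φ, hstrict, hpos => fun hww' h =>
    have hrel := hS.atom_nom_rel k hk _ _ hww' i
    ⟨(hS.dom k hk _ _ hrel).2, hS.lsat_of_lsat hk φ hstrict hpos hrel h.2⟩
  | k, hk, .dia φ, hstrict, hpos => fun hww' ⟨v, hRv, hv⟩ =>
    have ⟨v', hRv', hvv'⟩ := hS.zig k hk _ _ hww' v hRv
    ⟨v', hRv', hS.lsat_of_lsat hk φ hstrict hpos hvv' hv⟩

/-- **Preservation under `n`-layered simulation.**  If `S` is an `n`-layered
simulation from `M` to `M'`, `k ≤ n`, `(w_0,…,w_k) S_k (w'_0,…,w'_k)`, and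
`φ ∈ SFm⁺(k,Δⁿ)` is a positive strict `k`-layered formula, then
`M_k, w ⊨_k φ` implies `M'_k, w' ⊨_k φ`. -/
theorem preservation_layered_sim {n : ℕ} {S : LSig} (M M' : LModel n S)
    (Srel : ∀ k, (∀ r, M.W r) → (∀ r, M'.W r) → Prop)
    (hS : IsLayeredSim M M' Srel) (k : ℕ) (hk : k ≤ n)
    (w : ∀ r, M.W r) (w' : ∀ r, M'.W r) (hww' : Srel k w w')
    (φ : LForm S k) (hstrict : φ.Strict) (hpos : φ.Positive) :
    LSat (M.restrict k hk) k φ w → LSat (M'.restrict k hk) k φ w' :=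
  (hS.restrict k hk).lsat_of_lsat le_rfl φ hstrict hpos hww'
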